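/- Let t0 > 1 and set γ(t) = t^{−1/2}. Then for every continuous non-increasing function S : [t0,∞) → ℝ with S(t) → 0 as t → +∞ there exist constants H11 and H12, depending only on t0, Λ1, Λ2 and S(t0), such that for every coefficient c in the class PS(t0,Λ1,Λ2,S,γ) with stabilization constant c∞, every λ > 0, and every solution u of u''(t) + λ² c(t) u(t) = 0 on [t0,∞), the Kowaleskian energy E(t) = u'(t)²/√c∞ + λ²√c∞·u(t)² satisfies E(t) ≤ E(t0)·H11·exp( H12·(log t)^{1/2} ) for all t ≥ t0. -/

import Mathlib

/-!
With the frozen speed `√c∞`, the energy satisfies `E' ≤ (λ/√c∞)·|c - c∞|·E`, so Gronwall's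
inequality and the stabilization condition give `E(t) ≤ E(t₀)·exp(λ·S(t₀)/√Λ₁)`: good for
bounded `λ`. For large `λ` one follows instead the energy with the local speed `√c(t)`, corrected
by `φ·u·u'` with `φ = c'/(2c^{3/2})`; the correction cancels every term of the derivative except
`φ'·u·u'`, and `|φ'| ≲ 1/t`, `|u·u'| ≲ E/λ`, so the corrected energy grows at most like
`t^{C/λ}`. Using the first bound for `λ ≲ √(log t)` and the second otherwise gives
`exp(C·√(log t))`.
-/

open Real Set Filter MeasureTheory

/-- The Kowaleskian energy `E(t) = u'(t)²/√c∞ + λ²·√c∞·u(t)²`. -/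
noncomputable def kowE (cinf lam : ℝ) (u u' : ℝ → ℝ) (t : ℝ) : ℝ :=
  (u' t) ^ 2 / Real.sqrt cinf + lam ^ 2 * Real.sqrt cinf * (u t) ^ 2

open Topology

theorem le_mul_exp_sub_of_hasDerivWithinAt_le_mul {a t : ℝ} {f f' g g' : ℝ → ℝ}
    (hf : ∀ x ∈ Ici a, HasDerivWithinAt f (f' x) (Ici a) x)
    (hg : ∀ x ∈ Ici a, HasDerivWithinAt g (g' x) (Ici a) x)
    (hle : ∀ x ∈ Ici a, f' x ≤ g' x * f x) (ht : a ≤ t) :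
    f t ≤ f a * exp (g t - g a) := by
  have hderiv : ∀ x ∈ Ici a, HasDerivWithinAt (fun y => f y * exp (-g y))
      ((f' x - g' x * f x) * exp (-g x)) (Ici a) x := fun x hx =>
    ((hf x hx).mul (hg x hx).neg.exp).congr_deriv (by simp only [Pi.neg_apply]; ring)
  have hanti : AntitoneOn (fun y => f y * exp (-g y)) (Ici a) := by
    refine antitoneOn_of_hasDerivWithinAt_nonpos (convex_Ici a)
      (f' := fun x => (f' x - g' x * f x) * exp (-g x))
      (fun x hx => (hderiv x hx).continuousWithinAt) (fun x hx => ?_) (fun x hx => ?_)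
    · exact (hderiv x (interior_subset hx)).mono interior_subset
    · exact mul_nonpos_of_nonpos_of_nonneg (sub_nonpos.2 (hle x (interior_subset hx)))
        (exp_pos _).le
  have key := mul_le_mul_of_nonneg_right (hanti self_mem_Ici ht ht) (exp_pos (g t)).le
  rwa [mul_assoc, ← exp_add, neg_add_cancel, exp_zero, mul_one, mul_assoc, ← exp_add,
    neg_add_eq_sub] at key

theorem hasDerivWithinAt_integral_Ici {a t : ℝ} {f : ℝ → ℝ} (hf : ContinuousOn f (Ici a))
    (ht : a ≤ t) : HasDerivWithinAt (fun x => ∫ τ in a..x, f τ) (f t) (Ici a) t := by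
  have hint : IntervalIntegrable f volume a t :=
    (hf.mono (uIcc_of_le ht ▸ Icc_subset_Ici_self)).intervalIntegrable
  rcases ht.eq_or_lt with rfl | hlt
  · exact intervalIntegral.integral_hasDerivWithinAt_right hint
      ⟨Ioi a, self_mem_nhdsWithin,
        (hf.mono Ioi_subset_Ici_self).aestronglyMeasurable measurableSet_Ioi⟩
      ((hf.continuousWithinAt self_mem_Ici).mono Ioi_subset_Ici_self)
  · have hnhds : Ici a ∈ 𝓝 t := Ici_mem_nhds hlt
    exact (intervalIntegral.integral_hasDerivAt_right hint
      ⟨Ici a, hnhds, hf.aestronglyMeasurable measurableSet_Ici⟩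
      (hf.continuousAt hnhds)).hasDerivWithinAt

section Oscillator

variable {lam : ℝ} {c u u' : ℝ → ℝ} {t : ℝ}


theorem kowE_nonneg {a : ℝ} : 0 ≤ kowE a lam u u' t := by
  unfold kowE
  positivity

theorem two_mul_abs_mul_le_kowE {a : ℝ} (ha : 0 < a) :
    2 * lam * |u t * u' t| ≤ kowE a lam u u' t := by
  have hs : 0 < √a := sqrt_pos.2 ha
  have hsq : 0 ≤ (|u' t| - lam * √a * |u t|) ^ 2 / √a := by positivity
  have hexp : (|u' t| - lam * √a * |u t|) ^ 2 / √a
      = kowE a lam u u' t - 2 * lam * |u t * u' t| := by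
    rw [kowE, abs_mul, ← sq_abs (u' t), ← sq_abs (u t)]
    field_simp
    ring
  linarith

theorem kowE_le_mul_kowE {Λ1 Λ2 a b : ℝ} (hΛ1 : 0 < Λ1) (ha : a ∈ Icc Λ1 Λ2)
    (hb : b ∈ Icc Λ1 Λ2) : kowE a lam u u' t ≤ √Λ2 / √Λ1 * kowE b lam u u' t := by
  have hratio {x y : ℝ} (hx : x ∈ Icc Λ1 Λ2) (hy : y ∈ Icc Λ1 Λ2) :
      √y / √x ≤ √Λ2 / √Λ1 :=
    div_le_div₀ (sqrt_nonneg _) (sqrt_le_sqrt hy.2) (sqrt_pos.2 hΛ1) (sqrt_le_sqrt hx.1)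
  have hpos {x : ℝ} (hx : x ∈ Icc Λ1 Λ2) : 0 < √x := sqrt_pos.2 (hΛ1.trans_le hx.1)
  have h1 : u' t ^ 2 / √a ≤ √Λ2 / √Λ1 * (u' t ^ 2 / √b) := by
    calc u' t ^ 2 / √a = √b / √a * (u' t ^ 2 / √b) := by field_simp [(hpos hb).ne']
      _ ≤ _ := mul_le_mul_of_nonneg_right (hratio ha hb) (by positivity)
  have h2 : lam ^ 2 * √a * u t ^ 2 ≤ √Λ2 / √Λ1 * (lam ^ 2 * √b * u t ^ 2) := by
    calc lam ^ 2 * √a * u t ^ 2 = √a / √b * (lam ^ 2 * √b * u t ^ 2) := by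
          field_simp [(hpos hb).ne']
      _ ≤ _ := mul_le_mul_of_nonneg_right (hratio hb ha) (by positivity)
  rw [kowE, kowE, mul_add]
  exact add_le_add h1 h2

theorem hasDerivWithinAt_kowE {s : Set ℝ} {cinf : ℝ} (hcinf : 0 < cinf)
    (hu : HasDerivWithinAt u (u' t) s t)
    (hu' : HasDerivWithinAt u' (-(lam ^ 2 * c t * u t)) s t) :
    HasDerivWithinAt (kowE cinf lam u u')
      (2 * lam ^ 2 * (cinf - c t) / √cinf * (u t * u' t)) s t := by
  have hs : √cinf ≠ 0 := (sqrt_pos.2 hcinf).ne'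
  refine (((hu'.pow 2).div_const √cinf).add
    ((hu.pow 2).const_mul (lam ^ 2 * √cinf))).congr_deriv ?_
  field_simp
  rw [sq_sqrt hcinf.le]
  ring

theorem kowE_le_mul_exp_integral {t0 cinf : ℝ} (hcinf : 0 < cinf) (hlam : 0 ≤ lam)
    (hc : ContinuousOn c (Ici t0))
    (hu : ∀ x ∈ Ici t0, HasDerivWithinAt u (u' x) (Ici t0) x)
    (hu' : ∀ x ∈ Ici t0, HasDerivWithinAt u' (-(lam ^ 2 * c x * u x)) (Ici t0) x)
    (ht : t0 ≤ t) :
    kowE cinf lam u u' t ≤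
      kowE cinf lam u u' t0 * exp (lam / √cinf * ∫ τ in t0..t, |c τ - cinf|) := by
  have hle : ∀ x ∈ Ici t0, 2 * lam ^ 2 * (cinf - c x) / √cinf * (u x * u' x) ≤
      lam / √cinf * |c x - cinf| * kowE cinf lam u u' x := by
    intro x _
    have hprod : (cinf - c x) * (2 * lam * (u x * u' x)) ≤
        |c x - cinf| * (2 * lam * |u x * u' x|) := by
      calc _ ≤ |(cinf - c x) * (2 * lam * (u x * u' x))| := le_abs_self _
        _ = _ := by rw [abs_mul, abs_mul, abs_of_nonneg (by positivity : 0 ≤ 2 * lam),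
          abs_sub_comm]
    calc 2 * lam ^ 2 * (cinf - c x) / √cinf * (u x * u' x)
        = lam / √cinf * ((cinf - c x) * (2 * lam * (u x * u' x))) := by ring
      _ ≤ lam / √cinf * (|c x - cinf| * kowE cinf lam u u' x) := by
          refine mul_le_mul_of_nonneg_left (hprod.trans ?_) (by positivity)
          exact mul_le_mul_of_nonneg_left (two_mul_abs_mul_le_kowE hcinf) (abs_nonneg _)
      _ = _ := by ring
  simpa using le_mul_exp_sub_of_hasDerivWithinAt_le_mul
    (fun x hx => hasDerivWithinAt_kowE hcinf (hu x hx) (hu' x hx))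
    (fun x hx => (hasDerivWithinAt_integral_Ici ((hc.sub continuousOn_const).abs) hx).const_mul
      (lam / √cinf)) hle ht

noncomputable def correctedEnergy (c c' : ℝ → ℝ) (lam : ℝ) (u u' : ℝ → ℝ) (t : ℝ) : ℝ :=
  kowE (c t) lam u u' t + c' t / (2 * c t * √(c t)) * (u t * u' t)

theorem hasDerivWithinAt_correctedEnergy {s : Set ℝ} {c' c'' : ℝ → ℝ} (hcpos : 0 < c t)
    (hc : HasDerivWithinAt c (c' t) s t) (hc' : HasDerivWithinAt c' (c'' t) s t)
    (hu : HasDerivWithinAt u (u' t) s t)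
    (hu' : HasDerivWithinAt u' (-(lam ^ 2 * c t * u t)) s t) :
    HasDerivWithinAt (correctedEnergy c c' lam u u')
      ((c'' t / (2 * c t * √(c t)) - 3 * c' t ^ 2 / (4 * c t ^ 2 * √(c t))) * (u t * u' t))
      s t := by
  have hr : 0 < √(c t) := sqrt_pos.2 hcpos
  have hsqrt := hc.sqrt hcpos.ne'
  have hden : 2 * c t * √(c t) ≠ 0 := by positivity
  have h := (((hu'.pow 2).div hsqrt hr.ne').add ((hsqrt.const_mul (lam ^ 2)).mul (hu.pow 2))).add
    ((hc'.div ((hc.const_mul 2).mul hsqrt) hden).mul (hu.mul hu'))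
  refine h.congr_deriv ?_
  simp only [Pi.mul_apply, Pi.div_apply, Pi.pow_apply]
  have hsq := sq_sqrt hcpos.le
  generalize √(c t) = r at hr hsq ⊢
  generalize c t = C at hsq ⊢
  subst hsq
  field_simp
  ring

theorem abs_correctedEnergy_sub_kowE_le {c' : ℝ → ℝ} {M : ℝ} (hcpos : 0 < c t)
    (hM : |c' t / (2 * c t * √(c t))| ≤ M) (hMlam : 2 * M ≤ lam) :
    |correctedEnergy c c' lam u u' t - kowE (c t) lam u u' t| ≤ kowE (c t) lam u u' t / 4 := by
  rw [correctedEnergy, add_sub_cancel_left, abs_mul]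
  calc |c' t / (2 * c t * √(c t))| * |u t * u' t| ≤ M * |u t * u' t| :=
        mul_le_mul_of_nonneg_right hM (abs_nonneg _)
    _ ≤ 2 * lam * |u t * u' t| / 4 := by nlinarith [abs_nonneg (u t * u' t)]
    _ ≤ kowE (c t) lam u u' t / 4 := by gcongr; exact two_mul_abs_mul_le_kowE hcpos

theorem correction_deriv_mul_le {c' c'' : ℝ → ℝ} {M K : ℝ} (hcpos : 0 < c t)
    (hM : |c' t / (2 * c t * √(c t))| ≤ M) (hMlam : 2 * M ≤ lam) (hlam : 0 < lam)
    (hK : |c'' t / (2 * c t * √(c t)) - 3 * c' t ^ 2 / (4 * c t ^ 2 * √(c t))| ≤ K) :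
    (c'' t / (2 * c t * √(c t)) - 3 * c' t ^ 2 / (4 * c t ^ 2 * √(c t))) * (u t * u' t) ≤
      2 * K / (3 * lam) * correctedEnergy c c' lam u u' t := by
  have hcomp := (abs_le.1 (abs_correctedEnergy_sub_kowE_le (u := u) (u' := u') hcpos hM hMlam)).1
  have hK0 : 0 ≤ K := (abs_nonneg _).trans hK
  have huu' : |u t * u' t| ≤ kowE (c t) lam u u' t / (2 * lam) := by
    rw [le_div_iff₀ (by positivity), mul_comm]
    exact two_mul_abs_mul_le_kowE hcpos
  calc _ ≤ |c'' t / (2 * c t * √(c t)) - 3 * c' t ^ 2 / (4 * c t ^ 2 * √(c t))| *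
        |u t * u' t| := by rw [← abs_mul]; exact le_abs_self _
    _ ≤ K * (kowE (c t) lam u u' t / (2 * lam)) :=
        mul_le_mul hK huu' (abs_nonneg _) hK0
    _ ≤ K * (4 / 3 * correctedEnergy c c' lam u u' t / (2 * lam)) := by
        gcongr
        linarith
    _ = 2 * K / (3 * lam) * correctedEnergy c c' lam u u' t := by ring

theorem kowE_le_mul_exp_mul_log_sub {t0 M M' : ℝ} {c' c'' : ℝ → ℝ} (ht0 : 0 < t0)
    (hcpos : ∀ x ∈ Ici t0, 0 < c x)
    (hc : ∀ x ∈ Ici t0, HasDerivWithinAt c (c' x) (Ici t0) x)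
    (hc' : ∀ x ∈ Ici t0, HasDerivWithinAt c' (c'' x) (Ici t0) x)
    (hu : ∀ x ∈ Ici t0, HasDerivWithinAt u (u' x) (Ici t0) x)
    (hu' : ∀ x ∈ Ici t0, HasDerivWithinAt u' (-(lam ^ 2 * c x * u x)) (Ici t0) x)
    (hM : ∀ x ∈ Ici t0, |c' x / (2 * c x * √(c x))| ≤ M)
    (hM' : ∀ x ∈ Ici t0,
      |c'' x / (2 * c x * √(c x)) - 3 * c' x ^ 2 / (4 * c x ^ 2 * √(c x))| ≤ M' / x)
    (hlam : 0 < lam) (hMlam : 2 * M ≤ lam) (ht : t0 ≤ t) :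
    kowE (c t) lam u u' t ≤
      5 / 3 * kowE (c t0) lam u u' t0 * exp (2 * M' / 3 / lam * (log t - log t0)) := by
  have hcomp (x : ℝ) (hx : x ∈ Ici t0) := abs_le.1
    (abs_correctedEnergy_sub_kowE_le (u := u) (u' := u') (hcpos x hx) (hM x hx) hMlam)
  have hle (x : ℝ) (hx : x ∈ Ici t0) :=
    (correction_deriv_mul_le (u := u) (u' := u') (hcpos x hx) (hM x hx) hMlam hlam
      (hM' x hx)).trans_eq (by ring : 2 * (M' / x) / (3 * lam) * correctedEnergy c c' lam u u' x
        = 2 * M' / 3 / lam * x⁻¹ * correctedEnergy c c' lam u u' x)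
  have hgron := le_mul_exp_sub_of_hasDerivWithinAt_le_mul
    (fun x hx => hasDerivWithinAt_correctedEnergy (hcpos x hx) (hc x hx) (hc' x hx) (hu x hx)
      (hu' x hx))
    (fun x hx => ((hasDerivAt_log (ht0.trans_le hx).ne').hasDerivWithinAt).const_mul
      (2 * M' / 3 / lam)) hle ht
  have ht' := hcomp t ht
  have ht0' := hcomp t0 self_mem_Ici
  calc kowE (c t) lam u u' t ≤ 4 / 3 * correctedEnergy c c' lam u u' t := by linarith
    _ ≤ 4 / 3 * (correctedEnergy c c' lam u u' t0 *
          exp (2 * M' / 3 / lam * log t - 2 * M' / 3 / lam * log t0)) := by gcongr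
    _ ≤ 4 / 3 * (5 / 4 * kowE (c t0) lam u u' t0 *
          exp (2 * M' / 3 / lam * log t - 2 * M' / 3 / lam * log t0)) := by
          gcongr
          linarith
    _ = _ := by rw [← mul_sub]; ring

end Oscillator

theorem abs_correction_coeff_le {Λ1 t : ℝ} {c c' : ℝ → ℝ} (hΛ1 : 0 < Λ1) (hc : Λ1 ≤ c t)
    (hc' : |c' t| ≤ 1) : |c' t / (2 * c t * √(c t))| ≤ 1 / (2 * Λ1 * √Λ1) := by
  have hcpos : 0 < c t := hΛ1.trans_le hc
  rw [abs_div, abs_of_pos (by positivity : 0 < 2 * c t * √(c t))]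
  exact div_le_div₀ zero_le_one hc' (by positivity) (by gcongr)

theorem abs_correction_coeff_deriv_le {Λ1 t : ℝ} {c c' c'' : ℝ → ℝ} (hΛ1 : 0 < Λ1) (hc : Λ1 ≤ c t)
    (hc' : c' t ^ 2 ≤ t⁻¹) (hc'' : |c'' t| ≤ t⁻¹) :
    |c'' t / (2 * c t * √(c t)) - 3 * c' t ^ 2 / (4 * c t ^ 2 * √(c t))| ≤
      (1 / (2 * Λ1 * √Λ1) + 3 / (4 * Λ1 ^ 2 * √Λ1)) / t := by
  have hcpos : 0 < c t := hΛ1.trans_le hc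
  have ht : 0 ≤ t⁻¹ := (abs_nonneg _).trans hc''
  calc _ ≤ |c'' t / (2 * c t * √(c t))| + |3 * c' t ^ 2 / (4 * c t ^ 2 * √(c t))| :=
        abs_sub _ _
    _ = |c'' t| / (2 * c t * √(c t)) + 3 * c' t ^ 2 / (4 * c t ^ 2 * √(c t)) := by
        rw [abs_div, abs_of_pos (by positivity : 0 < 2 * c t * √(c t)),
          abs_of_nonneg (by positivity : 0 ≤ 3 * c' t ^ 2 / (4 * c t ^ 2 * √(c t)))]
    _ ≤ t⁻¹ / (2 * Λ1 * √Λ1) + 3 * t⁻¹ / (4 * Λ1 ^ 2 * √Λ1) := by gcongr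
    _ = _ := by ring

theorem rpow_neg_one_half_sq {t : ℝ} (ht : 0 < t) : (t ^ (-(1 : ℝ) / 2)) ^ 2 = t⁻¹ := by
  rw [← rpow_mul_natCast ht.le]
  norm_num [rpow_neg_one]

section CoefficientClass

variable {t0 Λ1 Λ2 cinf lam t : ℝ} {c c' c'' u u' : ℝ → ℝ}

theorem kowE_le_mul_exp_of_integral_le {S0 : ℝ} (hΛ1 : 0 < Λ1) (hcinf : Λ1 ≤ cinf)
    (hlam : 0 ≤ lam) (hc : ContinuousOn c (Ici t0))
    (hu : ∀ x ∈ Ici t0, HasDerivWithinAt u (u' x) (Ici t0) x)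
    (hu' : ∀ x ∈ Ici t0, HasDerivWithinAt u' (-(lam ^ 2 * c x * u x)) (Ici t0) x)
    (hS : ∫ τ in t0..t, |c τ - cinf| ≤ S0) (ht : t0 ≤ t) :
    kowE cinf lam u u' t ≤ kowE cinf lam u u' t0 * exp (S0 / √Λ1 * lam) := by
  refine (kowE_le_mul_exp_integral (hΛ1.trans_le hcinf) hlam hc hu hu' ht).trans
    (mul_le_mul_of_nonneg_left (exp_le_exp.2 ?_) kowE_nonneg)
  have hI : 0 ≤ ∫ τ in t0..t, |c τ - cinf| :=
    intervalIntegral.integral_nonneg ht fun _ _ => abs_nonneg _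
  calc lam / √cinf * ∫ τ in t0..t, |c τ - cinf|
      ≤ lam / √Λ1 * ∫ τ in t0..t, |c τ - cinf| := by gcongr
    _ ≤ lam / √Λ1 * S0 := by gcongr
    _ = S0 / √Λ1 * lam := by ring

theorem kowE_le_mul_exp_div_mul_log (ht0 : 1 ≤ t0) (hΛ1 : 0 < Λ1)
    (hcb : ∀ x ∈ Ici t0, c x ∈ Icc Λ1 Λ2) (hcinf : cinf ∈ Icc Λ1 Λ2)
    (hc : ∀ x ∈ Ici t0, HasDerivWithinAt c (c' x) (Ici t0) x)
    (hc' : ∀ x ∈ Ici t0, HasDerivWithinAt c' (c'' x) (Ici t0) x)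
    (hγ : ∀ x ∈ Ici t0,
      |c' x| ≤ x ^ (-(1 : ℝ) / 2) ∧ |c'' x| ≤ (x ^ (-(1 : ℝ) / 2)) ^ 2)
    (hu : ∀ x ∈ Ici t0, HasDerivWithinAt u (u' x) (Ici t0) x)
    (hu' : ∀ x ∈ Ici t0, HasDerivWithinAt u' (-(lam ^ 2 * c x * u x)) (Ici t0) x)
    (hlam : 1 / (Λ1 * √Λ1) ≤ lam) (ht : t0 ≤ t) :
    kowE cinf lam u u' t ≤ 5 / 3 * (√Λ2 / √Λ1) ^ 2 * kowE cinf lam u u' t0 *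
      exp (2 * (1 / (2 * Λ1 * √Λ1) + 3 / (4 * Λ1 ^ 2 * √Λ1)) / 3 / lam * log t) := by
  have hpos (x : ℝ) (hx : x ∈ Ici t0) : 0 < x := zero_lt_one.trans_le (ht0.trans hx)
  have hlam0 : 0 < lam := lt_of_lt_of_le (by positivity) hlam
  have hcoeff (x : ℝ) (hx : x ∈ Ici t0) :=
    abs_correction_coeff_le hΛ1 (hcb x hx).1 ((hγ x hx).1.trans
      (rpow_le_one_of_one_le_of_nonpos (ht0.trans hx) (by norm_num)))
  have hcoeff' (x : ℝ) (hx : x ∈ Ici t0) := by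
    obtain ⟨hc'x, hc''x⟩ := hγ x hx
    rw [rpow_neg_one_half_sq (hpos x hx)] at hc''x
    refine abs_correction_coeff_deriv_le (c' := c') hΛ1 (hcb x hx).1 ?_ hc''x
    rw [← sq_abs, ← rpow_neg_one_half_sq (hpos x hx)]
    exact pow_le_pow_left₀ (abs_nonneg _) hc'x 2
  have hρ : 0 ≤ √Λ2 / √Λ1 := by positivity
  have hgrowth := kowE_le_mul_exp_mul_log_sub (u := u) (u' := u') (hpos t0 self_mem_Ici)
    (fun x hx => hΛ1.trans_le (hcb x hx).1) hc hc' hu hu' hcoeff hcoeff' hlam0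
    ((by ring : 2 * (1 / (2 * Λ1 * √Λ1)) = 1 / (Λ1 * √Λ1)).trans_le hlam) ht
  have hlog : log t - log t0 ≤ log t := sub_le_self _ (log_nonneg ht0)
  calc kowE cinf lam u u' t ≤ √Λ2 / √Λ1 * kowE (c t) lam u u' t :=
        kowE_le_mul_kowE hΛ1 hcinf (hcb t ht)
    _ ≤ √Λ2 / √Λ1 * (5 / 3 * (√Λ2 / √Λ1 * kowE cinf lam u u' t0) *
          exp (2 * (1 / (2 * Λ1 * √Λ1) + 3 / (4 * Λ1 ^ 2 * √Λ1)) / 3 / lam * log t)) := by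
        refine mul_le_mul_of_nonneg_left (hgrowth.trans ?_) hρ
        exact mul_le_mul
          (mul_le_mul_of_nonneg_left (kowE_le_mul_kowE hΛ1 (hcb t0 self_mem_Ici) hcinf)
            (by norm_num))
          (exp_le_exp.2 (mul_le_mul_of_nonneg_left hlog (by positivity))) (exp_pos _).le
          (mul_nonneg (by norm_num) (mul_nonneg hρ kowE_nonneg))
    _ = _ := by ring

end CoefficientClass

theorem le_mul_exp_mul_sqrt_log_of_le_of_le {E0 Et K B C lam lam0 t : ℝ} (hE0 : 0 ≤ E0)
    (hK : 0 ≤ K) (hB : 0 ≤ B) (ht : 1 ≤ t) (hlam : 0 < lam) (hlam0 : 0 ≤ lam0)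
    (hsmall : Et ≤ E0 * exp (K * lam))
    (hlarge : lam0 ≤ lam → Et ≤ C * E0 * exp (B / lam * log t)) :
    Et ≤ E0 * (max 1 C * exp (K * lam0)) * exp ((K + B) * √(log t)) := by
  set σ := √(log t)
  have hσ : 0 ≤ σ := sqrt_nonneg _
  have hlog : log t = σ ^ 2 := (sq_sqrt (log_nonneg ht)).symm
  rcases le_or_gt lam (lam0 + σ) with hsm | hlg
  · calc Et ≤ E0 * exp (K * lam) := hsmall
      _ ≤ E0 * (1 * exp (K * lam0)) * exp ((K + B) * σ) := by
          rw [one_mul, mul_assoc, ← exp_add]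
          gcongr
          nlinarith
      _ ≤ _ := by gcongr; exact le_max_left _ _
  · have hσlam : σ ≤ lam := by linarith
    have hexp : B / lam * log t ≤ (K + B) * σ := by
      rw [hlog, div_mul_eq_mul_div, div_le_iff₀ hlam]
      nlinarith [mul_le_mul_of_nonneg_left hσlam (mul_nonneg hB hσ), mul_nonneg hK hσ]
    calc Et ≤ C * E0 * exp (B / lam * log t) := hlarge (by linarith)
      _ ≤ max 1 C * E0 * exp ((K + B) * σ) := by gcongr; exact le_max_right _ _
      _ ≤ max 1 C * E0 * exp ((K + B) * σ) * exp (K * lam0) :=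
          le_mul_of_one_le_right (by positivity) (one_le_exp (by positivity))
      _ = _ := by ring

theorem energy_growth_case_beta_eq_half_general
    (t0 Λ1 Λ2 : ℝ) (ht0 : 1 < t0) (hΛ1 : 0 < Λ1)
    (S : ℝ → ℝ) :
    ∃ H11 H12 : ℝ,
      ∀ (c c' c'' : ℝ → ℝ) (cinf : ℝ),
        (∀ t ∈ Ici t0, HasDerivWithinAt c (c' t) (Ici t0) t) →
        (∀ t ∈ Ici t0, HasDerivWithinAt c' (c'' t) (Ici t0) t) →
        ContinuousOn c'' (Ici t0) →
        (∀ t ∈ Ici t0, Λ1 ≤ c t ∧ c t ≤ Λ2) →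
        cinf ∈ Icc Λ1 Λ2 →
        (∀ t ∈ Ici t0, ∀ b ≥ t, (∫ τ in t..b, |c τ - cinf|) ≤ S t) →
        (∀ t ∈ Ici t0,
          |c' t| ≤ t ^ (-(1 : ℝ) / 2) ∧ |c'' t| ≤ (t ^ (-(1 : ℝ) / 2)) ^ 2) →
        ∀ lam : ℝ, 0 < lam →
        ∀ u u' : ℝ → ℝ,
          (∀ t ∈ Ici t0, HasDerivWithinAt u (u' t) (Ici t0) t) →
          (∀ t ∈ Ici t0, HasDerivWithinAt u' (-(lam ^ 2 * c t * u t)) (Ici t0) t) →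
          ∀ t ∈ Ici t0,
            kowE cinf lam u u' t ≤
              kowE cinf lam u u' t0 * H11 *
                Real.exp (H12 * Real.sqrt (Real.log t)) := by
  refine ⟨max 1 (5 / 3 * (√Λ2 / √Λ1) ^ 2) *
      exp (S t0 / √Λ1 * (1 / (Λ1 * √Λ1))),
    S t0 / √Λ1 + 2 * (1 / (2 * Λ1 * √Λ1) + 3 / (4 * Λ1 ^ 2 * √Λ1)) / 3, ?_⟩
  intro c c' c'' cinf hc hc' _ hcb hcinf hstab hγ lam hlam u u' hu hu' t ht
  have hS0 : 0 ≤ S t0 := by simpa using hstab t0 self_mem_Ici t0 le_rfl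
  have hc_cont : ContinuousOn c (Ici t0) := fun x hx => (hc x hx).continuousWithinAt
  exact le_mul_exp_mul_sqrt_log_of_le_of_le kowE_nonneg (by positivity) (by positivity)
    (ht0.le.trans ht) hlam (by positivity)
    (kowE_le_mul_exp_of_integral_le hΛ1 hcinf.1 hlam.le hc_cont hu hu'
      (hstab t0 self_mem_Ici t ht) ht)
    (fun hlarge => kowE_le_mul_exp_div_mul_log ht0.le hΛ1 hcb hcinf hc hc' hγ hu hu' hlarge ht)

theorem energy_growth_case_beta_eq_half
    (t0 Λ1 Λ2 : ℝ) (ht0 : 1 < t0) (hΛ1 : 0 < Λ1) (hΛ12 : Λ1 ≤ Λ2)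
    (S : ℝ → ℝ)
    (hS_cont : ContinuousOn S (Ici t0)) (hS_anti : AntitoneOn S (Ici t0))
    (hS_lim : Tendsto S atTop (nhds 0)) :
    ∃ H11 H12 : ℝ,
      ∀ (c c' c'' : ℝ → ℝ) (cinf : ℝ),
        (∀ t ∈ Ici t0, HasDerivWithinAt c (c' t) (Ici t0) t) →
        (∀ t ∈ Ici t0, HasDerivWithinAt c' (c'' t) (Ici t0) t) →
        ContinuousOn c'' (Ici t0) →
        (∀ t ∈ Ici t0, Λ1 ≤ c t ∧ c t ≤ Λ2) →
        cinf ∈ Icc Λ1 Λ2 →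
        (∀ t ∈ Ici t0, ∀ b ≥ t, (∫ τ in t..b, |c τ - cinf|) ≤ S t) →
        (∀ t ∈ Ici t0,
          |c' t| ≤ t ^ (-(1 : ℝ) / 2) ∧ |c'' t| ≤ (t ^ (-(1 : ℝ) / 2)) ^ 2) →
        ∀ lam : ℝ, 0 < lam →
        ∀ u u' : ℝ → ℝ,
          (∀ t ∈ Ici t0, HasDerivWithinAt u (u' t) (Ici t0) t) →
          (∀ t ∈ Ici t0, HasDerivWithinAt u' (-(lam ^ 2 * c t * u t)) (Ici t0) t) →
          ∀ t ∈ Ici t0,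
            kowE cinf lam u u' t ≤
              kowE cinf lam u u' t0 * H11 *
                Real.exp (H12 * Real.sqrt (Real.log t)) :=
  energy_growth_case_beta_eq_half_general t0 Λ1 Λ2 ht0 hΛ1 S
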